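/- Let W be a type, S a subset of W, and f, g : W → [0,1]. Then ((⨅_{w ∈ S} f w) ⇒ (⨆_{w ∈ S} g w)) ⇒ (⨆_{w ∈ S} g w) ≤ (⨅_{w ∈ S} ((f w ⇒ g w) ⇒ g w)) ⊔ (⨆_{w ∈ S} g w). (This is validity of the formula (T2): ((□φ → ◇ψ) → ◇ψ) → (□((φ → ψ) → ψ) ∨ ◇ψ) at any world of any crisp Gödel-Kripke model.) -/
import Mathlib


open unitInterval

instance : Fact ((0:ℝ) ≤ 1) := ⟨zero_le_one⟩

noncomputable instance : CompleteLattice unitInterval := Set.Icc.completeLattice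

/-- Gödel implication on the unit interval. -/
noncomputable def gimp (a b : unitInterval) : unitInterval := if a ≤ b then 1 else b

infixr:60 " ⇒ " => gimp

/-- Gödel negation on the unit interval. -/
noncomputable def gneg (a : unitInterval) : unitInterval := a ⇒ 0

theorem validity_T2 {W : Type*} (S : Set W) (f g : W → unitInterval) :
    (((⨅ w ∈ S, f w) ⇒ (⨆ w ∈ S, g w)) ⇒ (⨆ w ∈ S, g w)) ≤
      (⨅ w ∈ S, ((f w ⇒ g w) ⇒ g w)) ⊔ (⨆ w ∈ S, g w) := by
  set A := ⨅ w ∈ S, f w with hA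
  set B := ⨆ w ∈ S, g w with hB
  by_cases h : A ≤ B
  · rw [show (A ⇒ B) = 1 from if_pos h]
    by_cases h1 : (1:unitInterval) ≤ B
    · exact le_trans (le_trans (le_of_eq (if_pos h1)) h1) le_sup_right
    · rw [gimp, if_neg h1]; exact le_sup_right
  · rw [show (A ⇒ B) = B from if_neg h, show (B ⇒ B) = 1 from if_pos le_rfl]
    refine le_sup_of_le_left (le_iInf₂ fun w hw => ?_)
    have hfA : A ≤ f w := iInf₂_le w hw
    have hgB : g w ≤ B := le_iSup₂ (f := fun w _ => g w) w hw
    have hlt : ¬ f w ≤ g w := fun hle => h (hfA.trans (hle.trans hgB))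
    rw [show (f w ⇒ g w) = g w from if_neg hlt,
        show (g w ⇒ g w) = 1 from if_pos le_rfl]
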